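/- For integers m ≥ 3 and n ≥ 7, the minimum size of a self-identifying code of K_m × P_n satisfies γ^SID(K_m × P_n) ≥ ⌈(n+1)/3⌉·(m+2) − 2. -/

import Mathlib

/-!
Let `x j` be the number of codewords in column `j`. Separating a vertex `(i, j)` from `(i, j ± 2)`,
from `(i', j)` and from `(i', j ± 1)` forces codewords in the columns `j - 1, j, j + 1`; a case
analysis on how many rows column `j` misses turns this into: columns `0` and `n - 1` are full,
columns `1` and `n - 2` hold at least three codewords, `x 1 + x 2 + x 3 ≥ m + 1`, and columns
`k, k + 1, k + 2` with `2 ≤ k ≤ n - 5` hold at least `m + 2`. Covering the columns by `0`,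
`1, 2, 3`, `t = ⌊(n - 6) / 3⌋` such triples and `n - 2, n - 1` gives `(t + 3) (m + 2) - 2`, and
`t + 3 = ⌈(n + 1) / 3⌉`.
-/

open SimpleGraph Set

/-- Closed neighborhood of a vertex. -/
def cNbr {V : Type*} (G : SimpleGraph V) (v : V) : Set V := insert v (G.neighborSet v)

/-- `S` is a self-identifying code of `G`. -/
def IsSID {V : Type*} (G : SimpleGraph V) (S : Set V) : Prop :=
  S.Nonempty ∧ ∀ v : V, (cNbr G v ∩ S).Nonempty ∧
    (⋂ c ∈ cNbr G v ∩ S, cNbr G c) = {v}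

/-- Minimum cardinality of a self-identifying code. -/
noncomputable def gammaSID {V : Type*} (G : SimpleGraph V) : ℕ :=
  sInf {k | ∃ S : Set V, IsSID G S ∧ S.ncard = k}

/-- Direct product of the complete graph `K_m` with the path `P_n`. -/
def KmPn (m n : ℕ) : SimpleGraph (Fin m × Fin n) where
  Adj u w := u.1 ≠ w.1 ∧ ((u.2 : ℕ) + 1 = (w.2 : ℕ) ∨ (w.2 : ℕ) + 1 = (u.2 : ℕ))
  symm := ⟨fun u w h => ⟨h.1.symm, h.2.symm⟩⟩
  loopless := ⟨fun u h => h.1 rfl⟩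

/-- Direct product of the complete graph `K_m` with the cycle `C_n`. -/
def KmCn (m n : ℕ) : SimpleGraph (Fin m × ZMod n) where
  Adj u w := u.1 ≠ w.1 ∧ (u.2 + 1 = w.2 ∨ w.2 + 1 = u.2)
  symm := ⟨fun u w h => ⟨h.1.symm, h.2.symm⟩⟩
  loopless := ⟨fun u h => h.1 rfl⟩

theorem IsSID.exists_separating {V : Type*} {G : SimpleGraph V} {S : Set V} (hS : IsSID G S)
    {u v : V} (huv : u ≠ v) : ∃ c ∈ cNbr G v ∩ S, u ∉ cNbr G c := by
  by_contra! h
  have hu : u ∈ ⋂ c ∈ cNbr G v ∩ S, cNbr G c := mem_iInter₂.2 h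
  rw [(hS.2 v).2] at hu
  exact huv hu

theorem mem_cNbr_comm {V : Type*} {G : SimpleGraph V} {u v : V} :
    u ∈ cNbr G v ↔ v ∈ cNbr G u := by
  simp [cNbr, eq_comm, adj_comm]

theorem isSID_univ_of_forall_exists {V : Type*} [Nonempty V] {G : SimpleGraph V}
    (h : ∀ u v, u ≠ v → ∃ c ∈ cNbr G v, u ∉ cNbr G c) : IsSID G univ := by
  refine ⟨univ_nonempty, fun v => ⟨⟨v, mem_insert v _, trivial⟩, ?_⟩⟩
  refine Subset.antisymm (fun u hu => ?_) ?_
  · by_contra huv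
    obtain ⟨c, hc, hcu⟩ := h u v huv
    exact hcu (mem_iInter₂.1 hu c ⟨hc, trivial⟩)
  · simp only [singleton_subset_iff, mem_iInter₂]
    exact fun c hc => mem_cNbr_comm.1 hc.1

section RowSets

variable {α : Type*} {P Q R T : Set α}

theorem exists_ne_ne_of_three_le_natCard [Finite α] (hα : 3 ≤ Nat.card α) (x y : α) :
    ∃ z, z ≠ x ∧ z ≠ y :=
  ENat.exists_ne_ne_of_three_le (by simpa [ENat.card_eq_coe_natCard] using hα) x y

theorem three_le_ncard_of_forall_exists_ne_ne [Finite α] [Nontrivial α]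
    (h : ∀ i i', i ≠ i' → ∃ a ∈ T, a ≠ i ∧ a ≠ i') : 3 ≤ T.ncard := by
  obtain ⟨x, y, hxy⟩ := exists_pair_ne α
  obtain ⟨a, ha, -⟩ := h x y hxy
  obtain ⟨z, hz⟩ := exists_ne a
  obtain ⟨b, hb, hba, -⟩ := h a z hz.symm
  obtain ⟨c, hc, hca, hcb⟩ := h a b hba.symm
  exact (two_lt_ncard_iff).2 ⟨a, b, c, ha, hb, hc, hba.symm, hca.symm, hcb.symm⟩

theorem two_le_ncard_add_ncard_of_forall_exists [Finite α] [Nontrivial α]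
    (h : ∀ i i', i ≠ i' → (∃ a ∈ P, a ≠ i) ∨ ∃ a ∈ R, a ≠ i ∧ a ≠ i') :
    2 ≤ P.ncard + R.ncard := by
  by_contra! hlt
  obtain ⟨e, hPe⟩ := (ncard_le_one_iff_subset_singleton).1 (show P.ncard ≤ 1 by omega)
  have hR : ∀ i ≠ e, ∃ a ∈ R, a ≠ e ∧ a ≠ i := fun i hi =>
    (h e i hi.symm).resolve_left fun ⟨a, ha, hae⟩ => hae (hPe ha)
  obtain ⟨i, hi⟩ := exists_ne e
  obtain ⟨a, ha, hae, -⟩ := hR i hi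
  obtain ⟨b, hb, -, hba⟩ := hR a hae
  have := (one_lt_ncard_iff).2 ⟨a, b, ha, hb, hba.symm⟩
  omega

theorem union_eq_univ_of_ne_of_notMem
    (h : ∀ i i', i ≠ i' → i ∈ Q ∨ i' ∈ P ∨ i' ∈ R) {i₁ i₂ : α} (hne : i₁ ≠ i₂)
    (h₁ : i₁ ∉ Q) (h₂ : i₂ ∉ Q) : P ∪ R = univ := by
  refine eq_univ_of_forall fun i => ?_
  by_cases hi : i = i₁
  · subst hi
    exact (h i₂ i hne.symm).resolve_left h₂
  · exact (h i₁ i (Ne.symm hi)).resolve_left h₁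

theorem natCard_add_two_le_of_union_eq_univ [Finite α] [Nontrivial α] (hPR : P ∪ R = univ)
    (hPQ : ∀ i, i ∈ P ∨ ∃ a ∈ Q, a ≠ i) (hRQ : ∀ i, i ∈ R ∨ ∃ a ∈ Q, a ≠ i) :
    Nat.card α + 2 ≤ P.ncard + Q.ncard + R.ncard := by
  have hunion := ncard_union_add_ncard_inter P R
  rw [hPR, ncard_univ] at hunion
  have hPRQ : ∀ d, Q ⊆ {d} → d ∈ P ∩ R := fun d hQ =>
    ⟨(hPQ d).resolve_right fun ⟨a, ha, had⟩ => had (hQ ha),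
      (hRQ d).resolve_right fun ⟨a, ha, had⟩ => had (hQ ha)⟩
  rcases Nat.lt_or_ge 1 Q.ncard with hQ | hQ
  · omega
  obtain ⟨d, hQd⟩ := (ncard_le_one_iff_subset_singleton).1 hQ
  rcases Q.eq_empty_or_nonempty with rfl | ⟨q, hq⟩
  · obtain ⟨d', hd'⟩ := exists_ne d
    have := (one_lt_ncard_iff).2
      ⟨d', d, hPRQ d' (empty_subset _), hPRQ d (empty_subset _), hd'⟩
    omega
  · have := (ncard_pos).2 ⟨d, hPRQ d hQd⟩
    have := (ncard_pos).2 ⟨q, hq⟩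
    omega

theorem three_le_ncard_add_ncard_of_compl_singleton_subset [Finite α] (hα : 3 ≤ Nat.card α)
    {i₁ : α} (hPR : {i₁}ᶜ ⊆ P ∪ R) (hP : ∃ a ∈ P, a ≠ i₁) (hR : ∃ a ∈ R, a ≠ i₁)
    (h : ∀ i i', i ≠ i' → (∃ a ∈ P, a ≠ i) ∨ ∃ a ∈ R, a ≠ i ∧ a ≠ i') :
    3 ≤ P.ncard + R.ncard := by
  by_contra! hlt
  obtain ⟨e, he, hei⟩ := hP
  obtain ⟨f, hf, hfi⟩ := hR
  have hPe : ∀ a ∈ P, a = e := fun a ha => (ncard_le_one).1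
    (by have := (ncard_pos).2 ⟨f, hf⟩; omega) a ha e he
  have hRf : ∀ a ∈ R, a = f := fun a ha => (ncard_le_one).1
    (by have := (ncard_pos).2 ⟨e, he⟩; omega) a ha f hf
  by_cases hef : e = f
  · subst hef
    obtain ⟨z, hzi, hze⟩ := exists_ne_ne_of_three_le_natCard hα i₁ e
    rcases hPR hzi with hz | hz
    · exact hze (hPe z hz)
    · exact hze (hRf z hz)
  · rcases h e f hef with ⟨a, ha, hae⟩ | ⟨a, ha, -, haf⟩
    · exact hae (hPe a ha)
    · exact haf (hRf a ha)

/-- `P`, `Q`, `R` play the rows of codewords in three consecutive columns; the hypotheses are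
what separating pairs of vertices around the middle column forces. -/
theorem natCard_add_two_le_ncard_add_ncard_add_ncard [Finite α] (hα : 3 ≤ Nat.card α)
    (hQP : ∀ i, i ∈ Q ∨ ∃ a ∈ P, a ≠ i) (hQR : ∀ i, i ∈ Q ∨ ∃ a ∈ R, a ≠ i)
    (hPQ : ∀ i, i ∈ P ∨ ∃ a ∈ Q, a ≠ i) (hRQ : ∀ i, i ∈ R ∨ ∃ a ∈ Q, a ≠ i)
    (hsep : ∀ i i', i ≠ i' → i ∈ Q ∨ i' ∈ P ∨ i' ∈ R)
    (hcross : ∀ i i', i ≠ i' → (∃ a ∈ P, a ≠ i) ∨ ∃ a ∈ R, a ≠ i ∧ a ≠ i') :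
    Nat.card α + 2 ≤ P.ncard + Q.ncard + R.ncard := by
  have : Nontrivial α := Finite.one_lt_card_iff_nontrivial.1 (by omega)
  have hQc := ncard_add_ncard_compl Q
  rcases Nat.lt_or_ge 1 Qᶜ.ncard with hQ | hQ
  · obtain ⟨i₁, i₂, h₁, h₂, hne⟩ := (one_lt_ncard_iff).1 hQ
    exact natCard_add_two_le_of_union_eq_univ (union_eq_univ_of_ne_of_notMem hsep hne h₁ h₂)
      hPQ hRQ
  rcases Nat.le_one_iff_eq_zero_or_eq_one.1 hQ with hQ | hQ
  · have := two_le_ncard_add_ncard_of_forall_exists hcross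
    omega
  · obtain ⟨i₁, hi₁⟩ := ncard_eq_one.1 hQ
    have h₁ : i₁ ∉ Q := by simp [← mem_compl_iff, hi₁]
    have hPR : {i₁}ᶜ ⊆ P ∪ R := fun i hi =>
      (hsep i₁ i (Ne.symm hi)).resolve_left h₁
    have := three_le_ncard_add_ncard_of_compl_singleton_subset hα hPR
      ((hQP i₁).resolve_left h₁) ((hQR i₁).resolve_left h₁) hcross
    omega

theorem natCard_add_one_le_ncard_add_ncard_add_ncard [Finite α] (hP : 3 ≤ P.ncard)
    (hRQ : ∀ i, i ∈ R ∨ ∃ a ∈ Q, a ≠ i) (hsep : ∀ i i', i ≠ i' → i ∈ Q ∨ i' ∈ P ∨ i' ∈ R) :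
    Nat.card α + 1 ≤ P.ncard + Q.ncard + R.ncard := by
  have hQc := ncard_add_ncard_compl Q
  rcases Nat.lt_or_ge 1 Qᶜ.ncard with hQ | hQ
  · obtain ⟨i₁, i₂, h₁, h₂, hne⟩ := (one_lt_ncard_iff).1 hQ
    have hunion := ncard_union_le P R
    rw [union_eq_univ_of_ne_of_notMem hsep hne h₁ h₂, ncard_univ] at hunion
    rcases Q.eq_empty_or_nonempty with rfl | hQ
    · have : R = univ := eq_univ_of_forall fun i => (hRQ i).resolve_right (by simp)
      rw [this, ncard_univ]
      omega
    · have := (ncard_pos).2 hQ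
      omega
  · omega

end RowSets


theorem le_sum_range_of_block_bounds (x : ℕ → ℕ) {M n : ℕ} (hn : 7 ≤ n) (h0 : M ≤ x 0)
    (h123 : M + 1 ≤ x 1 + x 2 + x 3)
    (hblock : ∀ k, 2 ≤ k → k + 5 ≤ n → M + 2 ≤ x k + x (k + 1) + x (k + 2))
    (hpen : 3 ≤ x (n - 2)) (hlast : M ≤ x (n - 1)) :
    (n + 1 + 2) / 3 * (M + 2) - 2 ≤ ∑ j ∈ Finset.range n, x j := by
  have hblocks : ∀ t, 3 * t + 6 ≤ n →
      2 * M + 1 + t * (M + 2) ≤ ∑ j ∈ Finset.range (3 * t + 4), x j := by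
    intro t ht
    induction t with
    | zero => simp only [Finset.sum_range_succ, Finset.sum_range_zero]; omega
    | succ t ih =>
      rw [show 3 * (t + 1) + 4 = 3 * t + 4 + 1 + 1 + 1 by ring, Finset.sum_range_succ,
        Finset.sum_range_succ, Finset.sum_range_succ, add_one_mul]
      have : M + 2 ≤ x (3 * t + 4) + x (3 * t + 5) + x (3 * t + 6) :=
        hblock (3 * t + 4) (by omega) (by omega)
      have := ih (by omega)
      omega
  obtain ⟨t, ht⟩ : ∃ t, n = 3 * t + 6 + (n - 6) % 3 := ⟨(n - 6) / 3, by omega⟩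
  have hsplit : ∑ j ∈ Finset.range n, x j =
      ∑ j ∈ Finset.range (n - 2), x j + x (n - 2) + x (n - 1) := by
    rw [show n = n - 2 + 1 + 1 by omega, Finset.sum_range_succ, Finset.sum_range_succ]
    simp
  have hprefix : ∑ j ∈ Finset.range (3 * t + 4), x j ≤ ∑ j ∈ Finset.range (n - 2), x j :=
    Finset.sum_le_sum_of_subset (Finset.range_subset_range.2 (by omega))
  have := hblocks t (by omega)
  rw [show (n + 1 + 2) / 3 = t + 3 by omega, add_mul]
  omega

namespace KmPn

variable {m n : ℕ}

theorem mem_cNbr {v w : Fin m × Fin n} :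
    w ∈ cNbr (KmPn m n) v ↔
      w = v ∨ v.1 ≠ w.1 ∧ ((v.2 : ℕ) + 1 = w.2 ∨ (w.2 : ℕ) + 1 = v.2) := by
  simp [cNbr, KmPn]

theorem isSID_univ (hm : 3 ≤ m) (hn : 0 < n) : IsSID (KmPn m n) univ := by
  have : Nonempty (Fin m × Fin n) := ⟨(⟨0, by omega⟩, ⟨0, hn⟩)⟩
  refine isSID_univ_of_forall_exists fun u v huv => ?_
  by_cases hu : u ∈ cNbr (KmPn m n) v
  · -- `(a, u.2)` is a neighbour of `v` in the column of `u`, hence not adjacent to `u`.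
    obtain ⟨a, hav, hau⟩ := Fin.exists_ne_and_ne_of_two_lt v.1 u.1 (by omega)
    refine ⟨(a, u.2), ?_, ?_⟩ <;> simp only [mem_cNbr, Prod.ext_iff] at hu ⊢ <;> grind
  · exact ⟨v, mem_insert v _, hu⟩

variable {S : Set (Fin m × Fin n)}

/-- Indexed by `ℤ`, so that the columns `-1` and `n` are empty and the boundary columns are covered
by the same separation lemmas as the interior ones. -/
def column (S : Set (Fin m × Fin n)) (j : ℤ) : Set (Fin m) :=
  {i | ∃ v ∈ S, v.1 = i ∧ (v.2 : ℤ) = j}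

theorem column_eq_empty {j : ℤ} (hj : j < 0 ∨ n ≤ j) : column S j = ∅ := by
  refine eq_empty_of_forall_notMem fun i ⟨v, _, _, hv⟩ => ?_
  have := v.2.isLt
  omega

theorem exists_mem_column_separating (hS : IsSID (KmPn m n) S) {i i' : Fin m} {j j' : ℤ}
    (hj : 0 ≤ j ∧ j < n) (hj' : 0 ≤ j' ∧ j' < n) (hne : i ≠ i' ∨ j ≠ j') :
    ∃ a, ∃ k : ℤ, a ∈ column S k ∧ (a = i ∧ k = j ∨ a ≠ i ∧ (k = j + 1 ∨ k = j - 1)) ∧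
      ¬(a = i' ∧ k = j' ∨ a ≠ i' ∧ (k = j' + 1 ∨ k = j' - 1)) := by
  obtain ⟨⟨a, k⟩, ⟨hcv, hcS⟩, hcu⟩ := hS.exists_separating
    (u := (i', ⟨j'.toNat, by omega⟩)) (v := (i, ⟨j.toNat, by omega⟩))
    (by simp only [ne_eq, Prod.ext_iff, Fin.ext_iff] at hne ⊢; omega)
  refine ⟨a, k, ⟨_, hcS, rfl, rfl⟩, ?_, ?_⟩ <;>
    simp only [mem_cNbr, ne_eq, Prod.ext_iff, Fin.ext_iff] at hcv hcu ⊢ <;> omega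

theorem mem_column_or_exists_ne_mem_column_sub_one (hS : IsSID (KmPn m n) S) (i : Fin m)
    {j : ℤ} (h0 : 0 ≤ j) (hj : j + 2 < n) :
    i ∈ column S j ∨ ∃ a ∈ column S (j - 1), a ≠ i := by
  obtain ⟨a, k, ha, hv, hu⟩ := exists_mem_column_separating hS (i' := i) (j' := j + 2)
    ⟨h0, by omega⟩ ⟨by omega, hj⟩ (Or.inr (by omega))
  rcases hv with ⟨rfl, rfl⟩ | ⟨hai, rfl | rfl⟩
  · exact Or.inl ha
  · exact absurd (Or.inr ⟨hai, Or.inr (by ring)⟩) hu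
  · exact Or.inr ⟨a, ha, hai⟩

theorem mem_column_or_exists_ne_mem_column_add_one (hS : IsSID (KmPn m n) S) (i : Fin m)
    {j : ℤ} (h2 : 2 ≤ j) (hj : j < n) :
    i ∈ column S j ∨ ∃ a ∈ column S (j + 1), a ≠ i := by
  obtain ⟨a, k, ha, hv, hu⟩ := exists_mem_column_separating hS (i' := i) (j' := j - 2)
    ⟨by omega, hj⟩ ⟨by omega, by omega⟩ (Or.inr (by omega))
  rcases hv with ⟨rfl, rfl⟩ | ⟨hai, rfl | rfl⟩
  · exact Or.inl ha
  · exact Or.inr ⟨a, ha, hai⟩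
  · exact absurd (Or.inr ⟨hai, Or.inl (by ring)⟩) hu

theorem mem_column_or_mem_column_sub_one_or_mem_column_add_one (hS : IsSID (KmPn m n) S)
    {i i' : Fin m} (hne : i ≠ i') {j : ℤ} (h0 : 0 ≤ j) (hj : j < n) :
    i ∈ column S j ∨ i' ∈ column S (j - 1) ∨ i' ∈ column S (j + 1) := by
  obtain ⟨a, k, ha, hv, hu⟩ := exists_mem_column_separating hS (i' := i') (j' := j)
    ⟨h0, hj⟩ ⟨h0, hj⟩ (Or.inl hne)
  rcases hv with ⟨rfl, rfl⟩ | ⟨hai, rfl | rfl⟩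
  · exact Or.inl ha
  · obtain rfl : a = i' := by_contra fun h => hu (Or.inr ⟨h, Or.inl rfl⟩)
    exact Or.inr (Or.inr ha)
  · obtain rfl : a = i' := by_contra fun h => hu (Or.inr ⟨h, Or.inr rfl⟩)
    exact Or.inr (Or.inl ha)

theorem exists_ne_mem_column_sub_one_or_exists_ne_ne_mem_column_add_one
    (hS : IsSID (KmPn m n) S) {i i' : Fin m} (hne : i ≠ i') {j : ℤ} (h0 : 0 ≤ j)
    (hj : j + 1 < n) :
    (∃ a ∈ column S (j - 1), a ≠ i) ∨ ∃ a ∈ column S (j + 1), a ≠ i ∧ a ≠ i' := by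
  obtain ⟨a, k, ha, hv, hu⟩ := exists_mem_column_separating hS (i' := i') (j' := j + 1)
    ⟨h0, by omega⟩ ⟨by omega, hj⟩ (Or.inl hne)
  rcases hv with ⟨rfl, rfl⟩ | ⟨hai, rfl | rfl⟩
  · exact absurd (Or.inr ⟨hne, Or.inr (by ring)⟩) hu
  · exact Or.inr ⟨a, ha, hai, fun h => hu (Or.inl ⟨h, rfl⟩)⟩
  · exact Or.inl ⟨a, ha, hai⟩

theorem exists_ne_mem_column_add_one_or_exists_ne_ne_mem_column_sub_one
    (hS : IsSID (KmPn m n) S) {i i' : Fin m} (hne : i ≠ i') {j : ℤ} (h1 : 1 ≤ j)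
    (hj : j < n) :
    (∃ a ∈ column S (j + 1), a ≠ i) ∨ ∃ a ∈ column S (j - 1), a ≠ i ∧ a ≠ i' := by
  obtain ⟨a, k, ha, hv, hu⟩ := exists_mem_column_separating hS (i' := i') (j' := j - 1)
    ⟨by omega, hj⟩ ⟨by omega, by omega⟩ (Or.inl hne)
  rcases hv with ⟨rfl, rfl⟩ | ⟨hai, rfl | rfl⟩
  · exact absurd (Or.inr ⟨hne, Or.inl (by ring)⟩) hu
  · exact Or.inl ⟨a, ha, hai⟩
  · exact Or.inr ⟨a, ha, hai, fun h => hu (Or.inl ⟨h, rfl⟩)⟩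

theorem column_zero_eq_univ (hS : IsSID (KmPn m n) S) (hn : 3 ≤ n) : column S 0 = univ :=
  eq_univ_of_forall fun i =>
    (mem_column_or_exists_ne_mem_column_sub_one hS i le_rfl (by omega)).resolve_right
      (by simp [column_eq_empty])

theorem column_sub_one_eq_univ (hS : IsSID (KmPn m n) S) (hn : 3 ≤ n) :
    column S (n - 1) = univ :=
  eq_univ_of_forall fun i =>
    (mem_column_or_exists_ne_mem_column_add_one hS i (by omega) (by omega)).resolve_right
      (by simp [column_eq_empty])

theorem three_le_ncard_column_one (hS : IsSID (KmPn m n) S) (hm : 3 ≤ m) (hn : 2 ≤ n) :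
    3 ≤ (column S 1).ncard := by
  have : Nontrivial (Fin m) := Fin.nontrivial_iff_two_le.2 (by omega)
  refine three_le_ncard_of_forall_exists_ne_ne fun i i' hne => ?_
  refine (exists_ne_mem_column_sub_one_or_exists_ne_ne_mem_column_add_one hS hne le_rfl
    (by omega)).resolve_left ?_
  simp [column_eq_empty]

theorem three_le_ncard_column_sub_two (hS : IsSID (KmPn m n) S) (hm : 3 ≤ m) (hn : 2 ≤ n) :
    3 ≤ (column S (n - 2)).ncard := by
  have : Nontrivial (Fin m) := Fin.nontrivial_iff_two_le.2 (by omega)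
  refine three_le_ncard_of_forall_exists_ne_ne fun i i' hne => ?_
  have := (exists_ne_mem_column_add_one_or_exists_ne_ne_mem_column_sub_one hS hne
    (j := n - 1) (by omega) (by omega)).resolve_left (by simp [column_eq_empty])
  rwa [show (n : ℤ) - 1 - 1 = n - 2 by ring] at this

theorem add_one_le_ncard_column_one_add_two_add_three (hS : IsSID (KmPn m n) S) (hm : 3 ≤ m)
    (hn : 6 ≤ n) :
    m + 1 ≤ (column S 1).ncard + (column S 2).ncard + (column S 3).ncard := by
  simpa using natCard_add_one_le_ncard_add_ncard_add_ncard (three_le_ncard_column_one hS hm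
    (by omega)) (fun i => mem_column_or_exists_ne_mem_column_sub_one hS i (j := 3) (by omega)
      (by omega))
    (fun i i' hne => mem_column_or_mem_column_sub_one_or_mem_column_add_one hS hne (j := 2)
      (by omega) (by omega))

theorem add_two_le_ncard_column_add_ncard_column_add_ncard_column (hS : IsSID (KmPn m n) S)
    (hm : 3 ≤ m) {k : ℤ} (hk : 2 ≤ k) (hkn : k + 5 ≤ n) :
    m + 2 ≤ (column S k).ncard + (column S (k + 1)).ncard + (column S (k + 2)).ncard := by
  have e₁ : k + 1 - 1 = k := by ring
  have e₂ : k + 1 + 1 = k + 2 := by ring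
  have e₃ : k + 2 - 1 = k + 1 := by ring
  calc m + 2 = Nat.card (Fin m) + 2 := by simp
    _ ≤ _ := natCard_add_two_le_ncard_add_ncard_add_ncard (by simpa using hm) ?_ ?_ ?_ ?_ ?_ ?_
  · intro i
    simpa only [e₁] using
      mem_column_or_exists_ne_mem_column_sub_one hS i (j := k + 1) (by omega) (by omega)
  · intro i
    simpa only [e₂] using
      mem_column_or_exists_ne_mem_column_add_one hS i (j := k + 1) (by omega) (by omega)
  · exact fun i => mem_column_or_exists_ne_mem_column_add_one hS i hk (by omega)
  · intro i
    simpa only [e₃] using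
      mem_column_or_exists_ne_mem_column_sub_one hS i (j := k + 2) (by omega) (by omega)
  · intro i i' hne
    simpa only [e₁, e₂] using
      mem_column_or_mem_column_sub_one_or_mem_column_add_one hS hne (j := k + 1) (by omega)
        (by omega)
  · intro i i' hne
    simpa only [e₁, e₂] using
      exists_ne_mem_column_sub_one_or_exists_ne_ne_mem_column_add_one hS hne (j := k + 1)
        (by omega) (by omega)

theorem ncard_eq_sum_ncard_column (S : Set (Fin m × Fin n)) :
    S.ncard = ∑ j ∈ Finset.range n, (column S j).ncard := by
  classical
  rw [ncard_eq_toFinset_card', Finset.card_eq_sum_card_fiberwise (f := fun v => (v.2 : ℕ))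
    (t := Finset.range n) (fun v _ => by simp)]
  refine Finset.sum_congr rfl fun j _ => ?_
  rw [← Finset.card_image_of_injOn (f := Prod.fst), ← ncard_coe_finset]
  · congr
    ext i
    simp [column]
  · rintro ⟨a, k⟩ hk ⟨b, l⟩ hl (rfl : a = b)
    simp only [Finset.coe_filter, mem_toFinset, mem_ofPred_eq] at hk hl
    simp [Fin.ext_iff, hk.2, hl.2]

theorem le_ncard_of_isSID (hm : 3 ≤ m) (hn : 7 ≤ n) (hS : IsSID (KmPn m n) S) :
    (n + 1 + 2) / 3 * (m + 2) - 2 ≤ S.ncard := by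
  rw [ncard_eq_sum_ncard_column]
  refine le_sum_range_of_block_bounds (fun j => (column S j).ncard) hn ?_ ?_ ?_ ?_ ?_
  · simp [column_zero_eq_univ hS (by omega)]
  · exact_mod_cast add_one_le_ncard_column_one_add_two_add_three hS hm (by omega)
  · intro k hk hkn
    exact_mod_cast add_two_le_ncard_column_add_ncard_column_add_ncard_column hS hm (k := k)
      (by omega) (by omega)
  · simpa [Nat.cast_sub (by omega : 2 ≤ n)] using three_le_ncard_column_sub_two hS hm (by omega)
  · simp [Nat.cast_sub (by omega : 1 ≤ n), column_sub_one_eq_univ hS (by omega)]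

end KmPn

theorem stmt13 (m n : ℕ) (hm : 3 ≤ m) (hn : 7 ≤ n) :
    (n + 1 + 2) / 3 * (m + 2) - 2 ≤ gammaSID (KmPn m n) :=
  le_csInf ⟨_, univ, KmPn.isSID_univ hm (by omega), rfl⟩ fun _ ⟨_, hS, hk⟩ =>
    hk ▸ KmPn.le_ncard_of_isSID hm hn hS
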